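/- arXiv:2009.04408 — 5 statements merged into one kernel-verified Lean document; each statement's English description precedes it below -/
import Mathlib

section
/- If ξ and η are essentially bounded random variables with ξ ≤ 0, η ≥ 0, and {ξ < 0} ∩ {η > 0} = ∅ almost surely, then ξ and η are comonotonic, i.e., there exist a random variable ζ and nondecreasing functions f, g : ℝ → ℝ with ξ = f(ζ) and η = g(ζ) almost surely. -/
open MeasureTheory

/-! Take `ζ = ξ + η`. Almost surely one of `ξ ≤ 0` and `η ≥ 0` vanishes, so `ξ = min ζ 0` and
`η = max ζ 0`, and both truncations are monotone. -/

section

variable {α : Type*} [AddCommGroup α] [LinearOrder α] {x y : α}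

lemma min_add_zero_eq_left (hx : x ≤ 0) (hy : 0 ≤ y) (hxy : ¬(x < 0 ∧ 0 < y)) :
    min (x + y) 0 = x := by
  rcases hx.eq_or_lt with rfl | hx
  · simpa using hy
  · have hy : y = 0 := le_antisymm (not_lt.1 fun h => hxy ⟨hx, h⟩) hy
    simpa [hy] using hx.le

lemma max_add_zero_eq_right (hx : x ≤ 0) (hy : 0 ≤ y) (hxy : ¬(x < 0 ∧ 0 < y)) :
    max (x + y) 0 = y := by
  rcases hx.eq_or_lt with rfl | hx
  · simpa using hy
  · have hy : y = 0 := le_antisymm (not_lt.1 fun h => hxy ⟨hx, h⟩) hy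
    simpa [hy] using hx.le

end

theorem stmt_0_general {Ω : Type*} [MeasurableSpace Ω] (μ : Measure Ω)
    (ξ η : Ω → ℝ)
    (hξ0 : ∀ᵐ ω ∂μ, ξ ω ≤ 0) (hη0 : ∀ᵐ ω ∂μ, 0 ≤ η ω)
    (hdisj : ∀ᵐ ω ∂μ, ¬(ξ ω < 0 ∧ 0 < η ω)) :
    ∃ (ζ : Ω → ℝ) (f g : ℝ → ℝ), Monotone f ∧ Monotone g ∧
      (∀ᵐ ω ∂μ, ξ ω = f (ζ ω)) ∧ (∀ᵐ ω ∂μ, η ω = g (ζ ω)) := by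
  refine ⟨ξ + η, (min · 0), (max · 0), fun _ _ h => min_le_min h le_rfl,
    fun _ _ h => max_le_max h le_rfl, ?_, ?_⟩
  · filter_upwards [hξ0, hη0, hdisj] with ω hξ hη hξη
    exact (min_add_zero_eq_left hξ hη hξη).symm
  · filter_upwards [hξ0, hη0, hdisj] with ω hξ hη hξη
    exact (max_add_zero_eq_right hξ hη hξη).symm

/-- If ξ ≤ 0 a.s., η ≥ 0 a.s., and a.s. not (ξ < 0 and η > 0),
then ξ and η are comonotonic (a.s. nondecreasing functions of a common random variable). -/
theorem stmt_0 {Ω : Type*} [MeasurableSpace Ω] (μ : Measure Ω) [IsProbabilityMeasure μ]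
    (ξ η : Ω → ℝ) (hξm : Measurable ξ) (hηm : Measurable η)
    (hξb : ∃ C : ℝ, ∀ᵐ ω ∂μ, |ξ ω| ≤ C) (hηb : ∃ C : ℝ, ∀ᵐ ω ∂μ, |η ω| ≤ C)
    (hξ0 : ∀ᵐ ω ∂μ, ξ ω ≤ 0) (hη0 : ∀ᵐ ω ∂μ, 0 ≤ η ω)
    (hdisj : ∀ᵐ ω ∂μ, ¬(ξ ω < 0 ∧ 0 < η ω)) :
    ∃ (ζ : Ω → ℝ) (f g : ℝ → ℝ), Monotone f ∧ Monotone g ∧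
      (∀ᵐ ω ∂μ, ξ ω = f (ζ ω)) ∧ (∀ᵐ ω ∂μ, η ω = g (ζ ω)) :=
  stmt_0_general μ ξ η hξ0 hη0 hdisj
end

section
/- Every comonotonic convex monetary valuation function on L^∞ is positively homogeneous (hence coherent). That is, if P : L^∞ → ℝ is convex, monotone-compatible (P(ξ) ≥ 0 for ξ ≥ 0), translation invariant (P(ξ + a) = P(ξ) + a for a ∈ ℝ), continuous from below, and additive on comonotonic pairs, then P(λξ) = λP(ξ) for all λ ≥ 0 and ξ ∈ L^∞. -/
/-!
Fix `ξ` and put `g t = P (t ξ)`. The multiples `s ξ` and `t ξ` (`s, t ≥ 0`) are comonotonic, so `g`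
is additive on `[0, ∞)`, and convexity of `P` makes `g` convex. For a convex `g` with `g 0 = 0` the
slope `g x / x` is nondecreasing in `x > 0`, while additivity makes it invariant under `x ↦ n x`;
a nondecreasing function invariant under all dilations by positive integers is constant, so `g c = c g 1`.
-/

open Set

/-- Two random variables are comonotonic if both are nondecreasing functions
of a common random variable. -/
def Comonotone {Ω : Type*} (ξ η : Ω → ℝ) : Prop :=
  ∃ (ζ : Ω → ℝ) (f g : ℝ → ℝ), Monotone f ∧ Monotone g ∧ ξ = f ∘ ζ ∧ η = g ∘ ζ

theorem comonotone_mul_left {Ω : Type*} (ξ : Ω → ℝ) {s t : ℝ} (hs : 0 ≤ s) (ht : 0 ≤ t) :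
    Comonotone (fun ω => s * ξ ω) (fun ω => t * ξ ω) :=
  ⟨ξ, (s * ·), (t * ·), monotone_mul_left_of_nonneg hs, monotone_mul_left_of_nonneg ht, rfl, rfl⟩

section AdditiveOnNonneg

variable {g : ℝ → ℝ} (hadd : ∀ s t, 0 ≤ s → 0 ≤ t → g (s + t) = g s + g t)
include hadd

theorem map_natCast_mul_of_add_nonneg (n : ℕ) {t : ℝ} (ht : 0 ≤ t) : g (n * t) = n * g t := by
  induction n with
  | zero => simpa using hadd 0 0 le_rfl le_rfl
  | succ n ih => rw [Nat.cast_succ, add_one_mul, hadd _ _ (by positivity) ht, ih, add_one_mul]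

theorem slope_eq_of_convexOn_of_add_nonneg (hg : ConvexOn ℝ (Ici 0) g) {x y : ℝ} (hx : 0 < x)
    (hxy : x ≤ y) : g x / x = g y / y := by
  have hg0 : g 0 = 0 := by simpa using map_natCast_mul_of_add_nonneg hadd 0 (le_refl (0 : ℝ))
  have slope_mono : ∀ {a b : ℝ}, 0 < a → a ≤ b → g a / a ≤ g b / b := fun ha hab => by
    simpa [hg0] using hg.secant_mono (le_refl (0 : ℝ)) ha.le (ha.trans_le hab).le ha.ne'
      (ha.trans_le hab).ne' hab
  obtain ⟨n, hn⟩ := exists_nat_ge (y / x)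
  have hnx : y ≤ n * x := (div_le_iff₀ hx).1 hn
  have hn0 : (0 : ℝ) < n := (div_pos (hx.trans_le hxy) hx).trans_le hn
  have slope_nx : g (n * x) / (n * x) = g x / x := by
    rw [map_natCast_mul_of_add_nonneg hadd n hx.le, mul_div_mul_left _ _ hn0.ne']
  refine le_antisymm (slope_mono hx hxy) ?_
  calc g y / y ≤ g (n * x) / (n * x) := slope_mono (hx.trans_le hxy) hnx
    _ = g x / x := slope_nx

theorem eq_mul_of_convexOn_of_add_nonneg (hg : ConvexOn ℝ (Ici 0) g) {c : ℝ} (hc : 0 ≤ c) :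
    g c = c * g 1 := by
  obtain rfl | hc := hc.eq_or_lt
  · simpa using map_natCast_mul_of_add_nonneg hadd 0 (le_refl (0 : ℝ))
  have hslope : g c / c = g 1 / 1 := by
    rcases le_total c 1 with hc1 | hc1
    · exact slope_eq_of_convexOn_of_add_nonneg hadd hg hc hc1
    · exact (slope_eq_of_convexOn_of_add_nonneg hadd hg one_pos hc1).symm
  rw [div_one, div_eq_iff hc.ne'] at hslope
  rw [hslope, mul_comm]

end AdditiveOnNonneg

theorem stmt_1_general {Ω : Type*} (P : (Ω → ℝ) → ℝ)
    (hconv : ∀ (ξ η : Ω → ℝ) (t : ℝ), 0 ≤ t → t ≤ 1 →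
      P (fun ω => t * ξ ω + (1 - t) * η ω) ≤ t * P ξ + (1 - t) * P η)
    (hcom : ∀ ξ η : Ω → ℝ, Comonotone ξ η → P (ξ + η) = P ξ + P η) :
    ∀ c : ℝ, 0 ≤ c → ∀ ξ : Ω → ℝ, P (fun ω => c * ξ ω) = c * P ξ := by
  intro c hc ξ
  have hadd : ∀ s t : ℝ, 0 ≤ s → 0 ≤ t →
      P (fun ω => (s + t) * ξ ω) = P (fun ω => s * ξ ω) + P (fun ω => t * ξ ω) :=
    fun s t hs ht => by
      rw [← hcom _ _ (comonotone_mul_left ξ hs ht)]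
      congr 1
      funext ω
      simp only [Pi.add_apply, add_mul]
  have hray : ConvexOn ℝ (Ici 0) fun t => P (fun ω => t * ξ ω) := by
    refine ⟨convex_Ici 0, fun x _ y _ a b ha _ hab => ?_⟩
    obtain rfl : b = 1 - a := by linarith
    simp only [smul_eq_mul]
    refine (le_of_eq (congrArg P ?_)).trans (hconv _ _ a ha (by linarith))
    funext ω
    ring
  simpa using eq_mul_of_convexOn_of_add_nonneg hadd hray hc

/-- Every comonotonic convex monetary valuation function on L^∞
is positively homogeneous. -/
theorem stmt_1 {Ω : Type*} (P : (Ω → ℝ) → ℝ)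
    (hpos : ∀ ξ : Ω → ℝ, (∀ ω, 0 ≤ ξ ω) → 0 ≤ P ξ)
    (hconv : ∀ (ξ η : Ω → ℝ) (t : ℝ), 0 ≤ t → t ≤ 1 →
      P (fun ω => t * ξ ω + (1 - t) * η ω) ≤ t * P ξ + (1 - t) * P η)
    (htrans : ∀ (ξ : Ω → ℝ) (a : ℝ), P (fun ω => ξ ω + a) = P ξ + a)
    (hcont : ∀ (ξn : ℕ → Ω → ℝ) (ξ : Ω → ℝ),
      (∀ n ω, ξn n ω ≤ ξn (n + 1) ω) →
      (∀ ω, Filter.Tendsto (fun n => ξn n ω) Filter.atTop (nhds (ξ ω))) →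
      Filter.Tendsto (fun n => P (ξn n)) Filter.atTop (nhds (P ξ)))
    (hcom : ∀ ξ η : Ω → ℝ, Comonotone ξ η → P (ξ + η) = P ξ + P η) :
    ∀ c : ℝ, 0 ≤ c → ∀ ξ : Ω → ℝ, P (fun ω => c * ξ ω) = c * P ξ :=
  stmt_1_general P hconv hcom
end

section
/- Let P be a coherent comonotonic valuation function with representation P(ξ) = sup_{Q ∈ S} E_Q[ξ] over a weakly compact scenario set S ⊂ L^1 of probability measures. For ξ ∈ L^∞ and m ∈ ℝ, any Q* ∈ S attaining P(ξ) = E_{Q*}[ξ] also attains the suprema for (ξ − m)^+, for −(ξ − m)^−, and for ξ ∧ m; i.e., ∇P(ξ) ⊆ ∇P((ξ−m)^+), ∇P(ξ) ⊆ ∇P(−(ξ−m)^−), and ∇P(ξ) ⊆ ∇P(ξ ∧ m). -/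
/-!
If `f` and `g` are nondecreasing with `f x + g x = x + a`, then `f ∘ ξ` and `g ∘ ξ` are comonotonic,
so `P (f ∘ ξ) + P (g ∘ ξ) = P ξ + a = E_Q[f ∘ ξ] + E_Q[g ∘ ξ]` for `Q ∈ ∇P(ξ)`. Since `E_Q ≤ P` on each
summand, both inequalities are equalities. The splittings `x - m = (x - m)⁺ - (x - m)⁻` and
`x = x ∧ m + (x - m)⁺` give the three claims.
-/

open MeasureTheory

theorem Monotone.exists_abs_comp_le {Ω : Type*} {f : ℝ → ℝ} (hf : Monotone f) {ξ : Ω → ℝ}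
    (hξ : ∃ C : ℝ, ∀ ω, |ξ ω| ≤ C) : ∃ C : ℝ, ∀ ω, |f (ξ ω)| ≤ C := by
  obtain ⟨C, hC⟩ := hξ
  refine ⟨max |f (-C)| |f C|, fun ω => ?_⟩
  obtain ⟨hlo, hhi⟩ := abs_le.mp (hC ω)
  exact abs_le_max_abs_abs (hf hlo) (hf hhi)

theorem integral_eq_and_integral_eq_of_add {Ω : Type*} [MeasurableSpace Ω] {P : (Ω → ℝ) → ℝ}
    {Q : Measure Ω} {ζ η : Ω → ℝ} (hζi : Integrable ζ Q) (hηi : Integrable η Q)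
    (hζ : ∫ ω, ζ ω ∂Q ≤ P ζ) (hη : ∫ ω, η ω ∂Q ≤ P η) (hadd : P (ζ + η) = P ζ + P η)
    (h : ∫ ω, (ζ + η) ω ∂Q = P (ζ + η)) :
    ∫ ω, ζ ω ∂Q = P ζ ∧ ∫ ω, η ω ∂Q = P η :=
  (add_eq_add_iff_eq_and_eq hζ hη).mp (by rw [← integral_add' hζi hηi, h, hadd])

theorem integral_comp_eq_of_monotone_add_eq {Ω : Type*} [MeasurableSpace Ω]
    {P : (Ω → ℝ) → ℝ} {Q : Measure Ω} [IsProbabilityMeasure Q]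
    (hdom : ∀ ζ : Ω → ℝ, Measurable ζ → (∃ C : ℝ, ∀ ω, |ζ ω| ≤ C) → ∫ ω, ζ ω ∂Q ≤ P ζ)
    (hcom : ∀ ξ η : Ω → ℝ, Comonotone ξ η → P (ξ + η) = P ξ + P η)
    (htrans : ∀ (ξ : Ω → ℝ) (a : ℝ), P (fun ω => ξ ω + a) = P ξ + a)
    {ξ : Ω → ℝ} (hξm : Measurable ξ) (hξb : ∃ C : ℝ, ∀ ω, |ξ ω| ≤ C) (hQξ : ∫ ω, ξ ω ∂Q = P ξ)
    {f g : ℝ → ℝ} (hf : Monotone f) (hg : Monotone g) {a : ℝ} (hfg : ∀ x, f x + g x = x + a) :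
    ∫ ω, f (ξ ω) ∂Q = P (fun ω => f (ξ ω)) ∧ ∫ ω, g (ξ ω) ∂Q = P (fun ω => g (ξ ω)) := by
  have hbounded : ∀ {φ : ℝ → ℝ}, Monotone φ →
      Integrable (fun ω => φ (ξ ω)) Q ∧ ∫ ω, φ (ξ ω) ∂Q ≤ P (fun ω => φ (ξ ω)) := fun hφ => by
    obtain ⟨C, hC⟩ := hφ.exists_abs_comp_le hξb
    exact ⟨.of_bound (hφ.measurable.comp hξm).aestronglyMeasurable C (.of_forall hC),
      hdom _ (hφ.measurable.comp hξm) ⟨C, hC⟩⟩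
  have hsum : (fun ω => f (ξ ω)) + (fun ω => g (ξ ω)) = fun ω => ξ ω + a := funext fun ω => hfg _
  refine integral_eq_and_integral_eq_of_add (hbounded hf).1 (hbounded hg).1 (hbounded hf).2
    (hbounded hg).2 (hcom _ _ ⟨ξ, f, g, hf, hg, rfl, rfl⟩) ?_
  have hξi : Integrable ξ Q := (hbounded (φ := id) monotone_id).1
  rw [hsum, htrans, integral_add hξi (integrable_const a), hQξ]
  simp

theorem stmt_2_general {Ω : Type*} [MeasurableSpace Ω]
    (P : (Ω → ℝ) → ℝ) (S : Set (Measure Ω))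
    (hSprob : ∀ Q ∈ S, IsProbabilityMeasure Q)
    -- P dominates the expectation under every scenario measure …
    (hdom : ∀ ζ : Ω → ℝ, Measurable ζ → (∃ C : ℝ, ∀ ω, |ζ ω| ≤ C) →
      ∀ Q ∈ S, ∫ ω, ζ ω ∂Q ≤ P ζ)
    (hcom : ∀ ξ η : Ω → ℝ, Comonotone ξ η → P (ξ + η) = P ξ + P η)
    (htrans : ∀ (ξ : Ω → ℝ) (a : ℝ), P (fun ω => ξ ω + a) = P ξ + a)
    (ξ : Ω → ℝ) (hξm : Measurable ξ) (hξb : ∃ C : ℝ, ∀ ω, |ξ ω| ≤ C) (m : ℝ)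
    (Q : Measure Ω) (hQS : Q ∈ S) (hQξ : ∫ ω, ξ ω ∂Q = P ξ) :
    (∫ ω, max (ξ ω - m) 0 ∂Q = P (fun ω => max (ξ ω - m) 0)) ∧
    (∫ ω, -max (m - ξ ω) 0 ∂Q = P (fun ω => -max (m - ξ ω) 0)) ∧
    (∫ ω, min (ξ ω) m ∂Q = P (fun ω => min (ξ ω) m)) := by
  have := hSprob Q hQS
  have hdomQ := fun ζ hζ hb => hdom ζ hζ hb Q hQS
  have hpos : Monotone fun x : ℝ => max (x - m) 0 :=
    fun x y hxy => max_le_max (by linarith) le_rfl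
  have hneg : Monotone fun x : ℝ => -max (m - x) 0 :=
    fun x y hxy => neg_le_neg (max_le_max (by linarith) le_rfl)
  have hmin : Monotone fun x : ℝ => min x m := fun x y hxy => min_le_min hxy le_rfl
  obtain ⟨h₁, h₂⟩ := integral_comp_eq_of_monotone_add_eq hdomQ hcom htrans hξm hξb hQξ
    hpos hneg (a := -m) fun x => by rcases le_total x m with h | h <;> simp [h] <;> ring
  obtain ⟨h₃, -⟩ := integral_comp_eq_of_monotone_add_eq hdomQ hcom htrans hξm hξb hQξ
    hmin hpos (a := 0) fun x => by rcases le_total x m with h | h <;> simp [h]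
  exact ⟨h₁, h₂, h₃⟩

/-- For a coherent comonotonic valuation P represented over a scenario
set S, any Q* ∈ ∇P(ξ) also lies in ∇P((ξ−m)⁺), ∇P(−(ξ−m)⁻) and ∇P(ξ ∧ m). -/
theorem stmt_2 {Ω : Type*} [MeasurableSpace Ω] (μ : Measure Ω) [IsProbabilityMeasure μ]
    (P : (Ω → ℝ) → ℝ) (S : Set (Measure Ω))
    (hSprob : ∀ Q ∈ S, IsProbabilityMeasure Q)
    (hSac : ∀ Q ∈ S, Q ≪ μ)
    -- P dominates the expectation under every scenario measure …
    (hdom : ∀ ζ : Ω → ℝ, Measurable ζ → (∃ C : ℝ, ∀ ω, |ζ ω| ≤ C) →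
      ∀ Q ∈ S, ∫ ω, ζ ω ∂Q ≤ P ζ)
    -- … and is attained on S (weak compactness)
    (hattain : ∀ ζ : Ω → ℝ, Measurable ζ → (∃ C : ℝ, ∀ ω, |ζ ω| ≤ C) →
      ∃ Q ∈ S, ∫ ω, ζ ω ∂Q = P ζ)
    (hcom : ∀ ξ η : Ω → ℝ, Comonotone ξ η → P (ξ + η) = P ξ + P η)
    (htrans : ∀ (ξ : Ω → ℝ) (a : ℝ), P (fun ω => ξ ω + a) = P ξ + a)
    (hhom : ∀ (c : ℝ), 0 ≤ c → ∀ ξ : Ω → ℝ, P (fun ω => c * ξ ω) = c * P ξ)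
    (ξ : Ω → ℝ) (hξm : Measurable ξ) (hξb : ∃ C : ℝ, ∀ ω, |ξ ω| ≤ C) (m : ℝ)
    (Q : Measure Ω) (hQS : Q ∈ S) (hQξ : ∫ ω, ξ ω ∂Q = P ξ) :
    (∫ ω, max (ξ ω - m) 0 ∂Q = P (fun ω => max (ξ ω - m) 0)) ∧
    (∫ ω, -max (m - ξ ω) 0 ∂Q = P (fun ω => -max (m - ξ ω) 0)) ∧
    (∫ ω, min (ξ ω) m ∂Q = P (fun ω => min (ξ ω) m)) :=
  stmt_2_general P S hSprob hdom hcom htrans ξ hξm hξb m Q hQS hQξ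
end

section
/- Fix Q* ∈ ∇P(Z), set π*(A) = E_{Q*}[Z·1_A], and define state payoffs Y*(A) = α*(A)(K−Z)^+ + (Z∧K)·1_A with α*(A) = E_{Q*}[(Z−K)^+ 1_A]/P((Z−K)^+). Then Y* is fair given π*: for all A ∈ F, P(Z·1_A − Y*(A)) + π*(A) ≤ P(Z·1_A). -/
/-!
Write `g = (Z - K)⁺` and `m = Z ∧ K`, so that `Z = g + m` is a comonotone splitting. On the
event `{Z ≤ K}` the net payoff `Z 1_A - Y*(A)` equals `α*(A) (m - K) ≤ 0`, and elsewhere it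
equals `g 1_A ≥ 0`, so comonotonic additivity, positive homogeneity and translation invariance
give `P(Z 1_A - Y*(A)) = P(g 1_A) + α*(A) (P m - K) = P(g 1_A) - E_{Q*}[g 1_A]`, since
`P m - K = -P g` and `α*(A) P g = E_{Q*}[g 1_A]`. Splitting `P(Z 1_A) = P(g 1_A) + P(m 1_A)` and
`π*(A)` likewise, fairness reduces to `E_{Q*}[m 1_A] ≤ P(m 1_A)`, which holds because `Q*` is a
scenario of `P`.
-/

open MeasureTheory

namespace ComonotoneRisk

variable {Ω : Type*}

def ComonotoneAdditive (P : (Ω → ℝ) → ℝ) : Prop :=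
  ∀ ξ η : Ω → ℝ,
    (∃ (ζ : Ω → ℝ) (f g : ℝ → ℝ), Monotone f ∧ Monotone g ∧ ξ = f ∘ ζ ∧ η = g ∘ ζ) →
    P (ξ + η) = P ξ + P η

def PositivelyHomogeneous (P : (Ω → ℝ) → ℝ) : Prop :=
  ∀ c : ℝ, 0 ≤ c → ∀ ξ : Ω → ℝ, P (fun ω => c * ξ ω) = c * P ξ

def IsScenario [MeasurableSpace Ω] (P : (Ω → ℝ) → ℝ) (Q : Measure Ω) : Prop :=
  ∀ ζ : Ω → ℝ, Measurable ζ → (∃ C : ℝ, ∀ ω, |ζ ω| ≤ C) → ∫ ω, ζ ω ∂Q ≤ P ζ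

lemma exists_abs_comp_le_of_monotone {ζ : Ω → ℝ} (hζ : ∃ C : ℝ, ∀ ω, |ζ ω| ≤ C)
    {f : ℝ → ℝ} (hf : Monotone f) : ∃ D : ℝ, ∀ ω, |f (ζ ω)| ≤ D := by
  obtain ⟨C, hC⟩ := hζ
  refine ⟨|f (-C)| + |f C|, fun ω => abs_le.2 ⟨?_, ?_⟩⟩
  · have := hf (abs_le.1 (hC ω)).1
    linarith [neg_abs_le (f (-C)), abs_nonneg (f C)]
  · have := hf (abs_le.1 (hC ω)).2
    linarith [le_abs_self (f C), abs_nonneg (f (-C))]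

lemma IsScenario.setIntegral_le [MeasurableSpace Ω] {P : (Ω → ℝ) → ℝ} {Q : Measure Ω}
    (hQ : IsScenario P Q) {A : Set Ω} (hA : MeasurableSet A) {ζ : Ω → ℝ}
    (hζm : Measurable ζ) (hζ : ∃ C : ℝ, ∀ ω, |ζ ω| ≤ C) :
    ∫ ω in A, ζ ω ∂Q ≤ P (A.indicator ζ) := by
  obtain ⟨C, hC⟩ := hζ
  rw [← integral_indicator hA]
  exact hQ _ (hζm.indicator hA) ⟨C, fun ω => (norm_indicator_le_norm_self ζ ω).trans (hC ω)⟩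

lemma max_sub_zero_add_min {α : Type*} [AddCommGroup α] [LinearOrder α] [IsOrderedAddMonoid α]
    (a b : α) : max (a - b) 0 + min a b = a := by
  rcases le_total a b with h | h
  · simp [h, sub_nonpos.2 h]
  · simp [h, sub_nonneg.2 h]

lemma setIntegral_eq_max_sub_add_min [MeasurableSpace Ω] {Q : Measure Ω} [IsFiniteMeasure Q]
    {ζ : Ω → ℝ} (hζ : Integrable ζ Q) (A : Set Ω) (K : ℝ) :
    ∫ ω in A, ζ ω ∂Q = ∫ ω in A, max (ζ ω - K) 0 ∂Q + ∫ ω in A, min (ζ ω) K ∂Q := by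
  have hpos : Integrable (fun ω => max (ζ ω - K) 0) Q := (hζ.sub (integrable_const K)).pos_part
  have hmin : Integrable (fun ω => min (ζ ω) K) Q := hζ.inf (integrable_const K)
  rw [← integral_add hpos.integrableOn hmin.integrableOn]
  simp only [max_sub_zero_add_min]

lemma max_sub_zero_of_eq_zero_or {a b : ℝ} (ha : 0 ≤ a) (hb : 0 ≤ b) (h : a = 0 ∨ b = 0) :
    max (a - b) 0 = a ∧ min (a - b) 0 = -b := by
  grind

namespace ComonotoneAdditive

variable {P : (Ω → ℝ) → ℝ}

lemma map_add (hP : ComonotoneAdditive P) {ζ ξ η : Ω → ℝ} {f g : ℝ → ℝ}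
    (hf : Monotone f) (hg : Monotone g) (hξ : ∀ ω, f (ζ ω) = ξ ω) (hη : ∀ ω, g (ζ ω) = η ω) :
    P (ξ + η) = P ξ + P η :=
  hP ξ η ⟨ζ, f, g, hf, hg, (funext hξ).symm, (funext hη).symm⟩

lemma map_eq_max_sub_add_min (hP : ComonotoneAdditive P) (ζ : Ω → ℝ) (K : ℝ) :
    P ζ = P (fun ω => max (ζ ω - K) 0) + P (fun ω => min (ζ ω) K) := by
  have hsplit : (fun ω => max (ζ ω - K) 0) + (fun ω => min (ζ ω) K) = ζ :=
    funext fun ω => max_sub_zero_add_min (ζ ω) K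
  conv_lhs => rw [← hsplit]
  exact hP.map_add (ζ := ζ) (f := fun t => max (t - K) 0) (g := fun t => min t K)
    (fun _ _ h => max_le_max (by linarith) le_rfl) (fun _ _ h => min_le_min h le_rfl)
    (fun _ => rfl) (fun _ => rfl)

lemma map_indicator_eq_max_sub_add_min (hP : ComonotoneAdditive P) {K : ℝ} (hK : 0 ≤ K)
    (ζ : Ω → ℝ) (A : Set Ω) :
    P (A.indicator ζ) =
      P (A.indicator fun ω => max (ζ ω - K) 0) + P (A.indicator fun ω => min (ζ ω) K) := by
  have hpos : (A.indicator fun ω => max (ζ ω - K) 0) = fun ω => max (A.indicator ζ ω - K) 0 :=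
    Set.indicator_comp_of_zero (g := fun t => max (t - K) 0) (by simp [hK])
  have hmin : (A.indicator fun ω => min (ζ ω) K) = fun ω => min (A.indicator ζ ω) K :=
    Set.indicator_comp_of_zero (g := fun t => min t K) (min_eq_left hK)
  rw [hpos, hmin]
  exact hP.map_eq_max_sub_add_min _ K

section Scenario

variable [MeasurableSpace Ω] {Q : Measure Ω} [IsProbabilityMeasure Q]

lemma map_const (hP : ComonotoneAdditive P) (hhom : PositivelyHomogeneous P)
    (hQ : IsScenario P Q) (c : ℝ) : P (fun _ => c) = c := by
  have hconst : ∀ c : ℝ, c ≤ P (fun _ => c) := fun c => by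
    simpa using hQ (fun _ => c) measurable_const ⟨|c|, fun _ => le_rfl⟩
  have hzero : P (fun _ => (0 : ℝ)) = 0 := by simpa using hhom 0 le_rfl (fun _ => 0)
  have hsum : P (fun _ => c) + P (fun _ => -c) = 0 := by
    rw [← hP.map_add (ζ := fun _ => c) monotone_const monotone_const (fun _ => rfl)
      (fun _ => rfl), ← hzero]
    congr 1
    funext
    simp
  linarith [hconst c, hconst (-c)]

lemma map_sub_const (hP : ComonotoneAdditive P) (hhom : PositivelyHomogeneous P)
    (hQ : IsScenario P Q) (ξ : Ω → ℝ) (c : ℝ) : P (fun ω => ξ ω - c) = P ξ - c :=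
  calc P (fun ω => ξ ω - c) = P (ξ + fun _ => -c) := by simp only [sub_eq_add_neg]; rfl
    _ = P ξ + P (fun _ => -c) :=
        hP.map_add (ζ := ξ) monotone_id monotone_const (fun _ => rfl) (fun _ => rfl)
    _ = P ξ - c := by rw [hP.map_const hhom hQ, sub_eq_add_neg]

lemma map_net_payoff (hP : ComonotoneAdditive P) (hhom : PositivelyHomogeneous P)
    (hQ : IsScenario P Q) (Z : Ω → ℝ) (K : ℝ) {α : ℝ} (hα : 0 ≤ α) (A : Set Ω) :
    P (fun ω => A.indicator Z ω -
        (α * max (K - Z ω) 0 + min (Z ω) K * A.indicator (fun _ => (1 : ℝ)) ω)) =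
      P (A.indicator fun ω => max (Z ω - K) 0) + α * (P (fun ω => min (Z ω) K) - K) := by
  set F : Ω → ℝ := fun ω => A.indicator Z ω -
    (α * max (K - Z ω) 0 + min (Z ω) K * A.indicator (fun _ => (1 : ℝ)) ω)
  have hF : ∀ ω, F ω = A.indicator (fun ω => max (Z ω - K) 0) ω - α * max (K - Z ω) 0 := by
    intro ω
    have hZ := max_sub_zero_add_min (Z ω) K
    by_cases hω : ω ∈ A <;> simp only [F, Set.indicator, hω, if_true, if_false] <;> linarith
  have hparts : ∀ ω, max (F ω) 0 = A.indicator (fun ω => max (Z ω - K) 0) ω ∧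
      min (F ω) 0 = -(α * max (K - Z ω) 0) := by
    intro ω
    rw [hF]
    refine max_sub_zero_of_eq_zero_or (Set.indicator_nonneg (fun _ _ => le_max_right _ _) ω)
      (mul_nonneg hα (le_max_right _ _)) ?_
    rcases le_total (Z ω) K with h | h
    · exact .inl (by simp [max_eq_right (sub_nonpos.2 h)])
    · exact .inr (by simp [max_eq_right (sub_nonpos.2 h)])
  have hpos : (fun ω => max (F ω - 0) 0) = A.indicator fun ω => max (Z ω - K) 0 := by
    simp only [sub_zero, (hparts _).1]
  have hneg : (fun ω => min (F ω) 0) = fun ω => α * (min (Z ω) K - K) := by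
    funext ω
    rw [(hparts ω).2, show min (Z ω) K - K = -max (K - Z ω) 0 by grind]
    ring
  rw [hP.map_eq_max_sub_add_min F 0, hpos, hneg, hhom α hα, hP.map_sub_const hhom hQ]

end Scenario

end ComonotoneAdditive

end ComonotoneRisk

open ComonotoneRisk

theorem stmt_10_general {Ω : Type*} [MeasurableSpace Ω]
    (P : (Ω → ℝ) → ℝ) (S : Set (Measure Ω))
    (hSprob : ∀ Q ∈ S, IsProbabilityMeasure Q)
    (hdom : ∀ ζ : Ω → ℝ, Measurable ζ → (∃ C : ℝ, ∀ ω, |ζ ω| ≤ C) →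
      ∀ Q ∈ S, ∫ ω, ζ ω ∂Q ≤ P ζ)
    (hcom : ∀ ξ η : Ω → ℝ,
      (∃ (ζ : Ω → ℝ) (f g : ℝ → ℝ), Monotone f ∧ Monotone g ∧ ξ = f ∘ ζ ∧ η = g ∘ ζ) →
      P (ξ + η) = P ξ + P η)
    (hhom : ∀ (c : ℝ), 0 ≤ c → ∀ ξ : Ω → ℝ, P (fun ω => c * ξ ω) = c * P ξ)
    (Z : Ω → ℝ) (hZm : Measurable Z) (hZ0 : ∀ ω, 0 ≤ Z ω) (hZb : ∃ C : ℝ, ∀ ω, Z ω ≤ C)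
    (K : ℝ) (hK : K = P Z)
    (hPpos : 0 < P (fun ω => max (Z ω - K) 0))
    (Qstar : Measure Ω) (hQS : Qstar ∈ S)
    (πs : Set Ω → ℝ) (hπ : ∀ A, πs A = ∫ ω in A, Z ω ∂Qstar)
    (αs : Set Ω → ℝ)
    (hα : ∀ A, αs A = (∫ ω in A, max (Z ω - K) 0 ∂Qstar) / P (fun ω => max (Z ω - K) 0))
    (Ys : Set Ω → Ω → ℝ)
    (hYs : ∀ A ω, Ys A ω = αs A * max (K - Z ω) 0 +
      min (Z ω) K * Set.indicator A (fun _ => (1 : ℝ)) ω) :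
    ∀ A : Set Ω, MeasurableSet A →
      P (fun ω => Set.indicator A Z ω - Ys A ω) + πs A ≤ P (Set.indicator A Z) := by
  intro A hA
  have := hSprob _ hQS
  have hP : ComonotoneAdditive P := hcom
  have hQ : IsScenario P Qstar := fun ζ hζm hζ => hdom ζ hζm hζ _ hQS
  obtain ⟨C, hC⟩ := hZb
  have hZabs : ∀ ω, |Z ω| ≤ C := fun ω => abs_le.2 ⟨by linarith [hZ0 ω, hC ω], hC ω⟩
  have hZint : Integrable Z Qstar := .of_bound hZm.aestronglyMeasurable C (ae_of_all _ hZabs)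
  have hK0 : 0 ≤ K := hK ▸ (integral_nonneg hZ0).trans (hQ Z hZm ⟨C, hZabs⟩)
  have hα0 : 0 ≤ αs A :=
    hα A ▸ div_nonneg (setIntegral_nonneg hA fun ω _ => le_max_right _ _) hPpos.le
  have hαP : αs A * P (fun ω => max (Z ω - K) 0) = ∫ ω in A, max (Z ω - K) 0 ∂Qstar := by
    rw [hα]
    exact div_mul_cancel₀ _ hPpos.ne'
  have hPZ := hP.map_eq_max_sub_add_min Z K
  have hmin : ∫ ω in A, min (Z ω) K ∂Qstar ≤ P (A.indicator fun ω => min (Z ω) K) :=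
    hQ.setIntegral_le hA (hZm.min measurable_const) <|
      exists_abs_comp_le_of_monotone (f := fun t => min t K) ⟨C, hZabs⟩
        fun _ _ h => min_le_min_right K h
  simp only [hYs]
  rw [hP.map_net_payoff hhom hQ Z K hα0 A, hP.map_indicator_eq_max_sub_add_min hK0 Z A, hπ,
    setIntegral_eq_max_sub_add_min hZint A K]
  linear_combination hmin - hαP - αs A * hK - αs A * hPZ

/-- With Q* ∈ ∇P(Z), π*(A) = E_{Q*}[Z·1_A] and
Y*(A) = α*(A)(K−Z)⁺ + (Z∧K)·1_A, where α*(A) = E_{Q*}[(Z−K)⁺1_A]/P((Z−K)⁺),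
the family Y* is fair given π*: P(Z·1_A − Y*(A)) + π*(A) ≤ P(Z·1_A) for all A. -/
theorem stmt_10 {Ω : Type*} [MeasurableSpace Ω] (μ : Measure Ω) [IsProbabilityMeasure μ]
    (P : (Ω → ℝ) → ℝ) (S : Set (Measure Ω))
    (hSprob : ∀ Q ∈ S, IsProbabilityMeasure Q)
    (hSac : ∀ Q ∈ S, Q ≪ μ)
    (hdom : ∀ ζ : Ω → ℝ, Measurable ζ → (∃ C : ℝ, ∀ ω, |ζ ω| ≤ C) →
      ∀ Q ∈ S, ∫ ω, ζ ω ∂Q ≤ P ζ)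
    (hcom : ∀ ξ η : Ω → ℝ,
      (∃ (ζ : Ω → ℝ) (f g : ℝ → ℝ), Monotone f ∧ Monotone g ∧ ξ = f ∘ ζ ∧ η = g ∘ ζ) →
      P (ξ + η) = P ξ + P η)
    (hhom : ∀ (c : ℝ), 0 ≤ c → ∀ ξ : Ω → ℝ, P (fun ω => c * ξ ω) = c * P ξ)
    (Z : Ω → ℝ) (hZm : Measurable Z) (hZ0 : ∀ ω, 0 ≤ Z ω) (hZb : ∃ C : ℝ, ∀ ω, Z ω ≤ C)
    (K : ℝ) (hK : K = P Z)
    (hPpos : 0 < P (fun ω => max (Z ω - K) 0))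
    (Qstar : Measure Ω) (hQS : Qstar ∈ S) (hQZ : ∫ ω, Z ω ∂Qstar = P Z)
    (πs : Set Ω → ℝ) (hπ : ∀ A, πs A = ∫ ω in A, Z ω ∂Qstar)
    (αs : Set Ω → ℝ)
    (hα : ∀ A, αs A = (∫ ω in A, max (Z ω - K) 0 ∂Qstar) / P (fun ω => max (Z ω - K) 0))
    (Ys : Set Ω → Ω → ℝ)
    (hYs : ∀ A ω, Ys A ω = αs A * max (K - Z ω) 0 +
      min (Z ω) K * Set.indicator A (fun _ => (1 : ℝ)) ω) :
    ∀ A : Set Ω, MeasurableSet A →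
      P (fun ω => Set.indicator A Z ω - Ys A ω) + πs A ≤ P (Set.indicator A Z) :=
  stmt_10_general P S hSprob hdom hcom hhom Z hZm hZ0 hZb K hK hPpos Qstar hQS πs hπ αs hα Ys hYs
end

section
/- Let Q* ∈ ∇P(S^X) and define πᵢ = E_{Q*}[Xᵢ] for i = 1,…,N and π₀ = k₀. Then π = (π₀,…,π_N) lies in the core of the cost game c^X(S) = P(Σ_{i∈S} Xᵢ) on {0,1,…,N} (with X₀ = k₀ constant); i.e., Σ_{i∈S} πᵢ ≤ P(Σ_{i∈S} Xᵢ) for all coalitions S and Σ_{i=0}^N πᵢ = P(Σ_{i=0}^N Xᵢ). -/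
/-!
Every scenario measure `Q ∈ S` prices each coalition below the risk measure: for bounded
`ζ`, `E_Q[ζ] ≤ P(ζ)`, and by linearity `E_Q[Σ_{i∈T} Xᵢ] = Σ_{i∈T} E_Q[Xᵢ]`. A maximizer `Q*` of
`E_Q[S^X]` attains `P(S^X)`, and translation invariance carries this over to the grand coalition
`S^X + k₀`, so the allocation `πᵢ = E_{Q*}[Xᵢ]` is efficient.
-/

open MeasureTheory

section

variable {Ω ι : Type*}

lemma exists_abs_finset_sum_le_of_nonneg {X : ι → Ω → ℝ} (hpos : ∀ i ω, 0 ≤ X i ω)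
    (hbdd : ∀ i, ∃ C : ℝ, ∀ ω, X i ω ≤ C) (T : Finset ι) :
    ∃ C : ℝ, ∀ ω, |∑ i ∈ T, X i ω| ≤ C := by
  choose C hC using hbdd
  refine ⟨∑ i ∈ T, C i, fun ω => ?_⟩
  rw [abs_of_nonneg (Finset.sum_nonneg fun i _ => hpos i ω)]
  exact Finset.sum_le_sum fun i _ => hC i ω

variable [MeasurableSpace Ω]

lemma integrable_of_nonneg_of_le {Q : Measure Ω} [IsFiniteMeasure Q] {f : Ω → ℝ}
    (hpos : ∀ ω, 0 ≤ f ω) (hm : Measurable f) (hbdd : ∃ C : ℝ, ∀ ω, f ω ≤ C) :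
    Integrable f Q := by
  obtain ⟨C, hC⟩ := hbdd
  exact Integrable.of_bound hm.aestronglyMeasurable C
    (Filter.Eventually.of_forall fun ω => by rw [Real.norm_of_nonneg (hpos ω)]; exact hC ω)

lemma finset_sum_integral_le {Q : Measure Ω} [IsFiniteMeasure Q] {P : (Ω → ℝ) → ℝ}
    (hdom : ∀ ζ : Ω → ℝ, Measurable ζ → (∃ C : ℝ, ∀ ω, |ζ ω| ≤ C) → ∫ ω, ζ ω ∂Q ≤ P ζ)
    {X : ι → Ω → ℝ} (hpos : ∀ i ω, 0 ≤ X i ω) (hm : ∀ i, Measurable (X i))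
    (hbdd : ∀ i, ∃ C : ℝ, ∀ ω, X i ω ≤ C) (T : Finset ι) :
    ∑ i ∈ T, ∫ ω, X i ω ∂Q ≤ P (fun ω => ∑ i ∈ T, X i ω) := by
  rw [← integral_finsetSum T fun i _ => integrable_of_nonneg_of_le (hpos i) (hm i) (hbdd i)]
  exact hdom _ (Finset.measurable_sum T fun i _ => hm i)
    (exists_abs_finset_sum_le_of_nonneg hpos hbdd T)

lemma integral_add_const_eq_of_integral_eq {Q : Measure Ω} [IsProbabilityMeasure Q]
    {P : (Ω → ℝ) → ℝ} (htrans : ∀ (ξ : Ω → ℝ) (a : ℝ), P (fun ω => ξ ω + a) = P ξ + a)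
    {ξ : Ω → ℝ} (hξ : Integrable ξ Q) (hQ : ∫ ω, ξ ω ∂Q = P ξ) (a : ℝ) :
    ∫ ω, ξ ω + a ∂Q = P (fun ω => ξ ω + a) := by
  rw [integral_add hξ (integrable_const a), integral_const, probReal_univ, one_smul, hQ, htrans]

end

theorem stmt_14_general {Ω : Type*} [MeasurableSpace Ω]
    (P : (Ω → ℝ) → ℝ) (S : Set (Measure Ω))
    (hSprob : ∀ Q ∈ S, IsProbabilityMeasure Q)
    (hdom : ∀ ζ : Ω → ℝ, Measurable ζ → (∃ C : ℝ, ∀ ω, |ζ ω| ≤ C) →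
      ∀ Q ∈ S, ∫ ω, ζ ω ∂Q ≤ P ζ)
    (htrans : ∀ (ξ : Ω → ℝ) (a : ℝ), P (fun ω => ξ ω + a) = P ξ + a)
    (N : ℕ) (X : Fin (N + 1) → Ω → ℝ)
    (hXpos : ∀ i ω, 0 ≤ X i ω) (hXm : ∀ i, Measurable (X i))
    (hXb : ∀ i, ∃ C : ℝ, ∀ ω, X i ω ≤ C)
    (k₀ : ℝ) (hX0 : ∀ ω, X 0 ω = k₀)
    (SX : Ω → ℝ) (hSX : ∀ ω, SX ω = ∑ i ∈ Finset.univ.erase 0, X i ω)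
    (Qstar : Measure Ω) (hQS : Qstar ∈ S) (hQSX : ∫ ω, SX ω ∂Qstar = P SX)
    (π : Fin (N + 1) → ℝ)
    (hπ0 : π 0 = k₀)
    (hπi : ∀ i : Fin (N + 1), i ≠ 0 → π i = ∫ ω, X i ω ∂Qstar) :
    (∀ T : Finset (Fin (N + 1)), ∑ i ∈ T, π i ≤ P (fun ω => ∑ i ∈ T, X i ω)) ∧
      ∑ i, π i = P (fun ω => ∑ i, X i ω) := by
  have := hSprob Qstar hQS
  have hint i : Integrable (X i) Qstar := integrable_of_nonneg_of_le (hXpos i) (hXm i) (hXb i)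
  have hπ : π = fun i => ∫ ω, X i ω ∂Qstar := by
    funext i
    rcases eq_or_ne i 0 with rfl | hi
    · simp [hX0, hπ0]
    · exact hπi i hi
  have hgrand : (fun ω => ∑ i, X i ω) = fun ω => SX ω + k₀ := by
    funext ω
    rw [hSX, ← Finset.sum_erase_add _ _ (Finset.mem_univ 0), hX0]
  have hSXint : Integrable SX Qstar := by
    rw [funext hSX]
    exact integrable_finsetSum _ fun i _ => hint i
  subst hπ
  refine ⟨finset_sum_integral_le (fun ζ hζ hbdd => hdom ζ hζ hbdd Qstar hQS) hXpos hXm hXb, ?_⟩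
  rw [← integral_finsetSum _ fun i _ => hint i, hgrand]
  exact integral_add_const_eq_of_integral_eq htrans hSXint hQSX k₀

/-- With Q* ∈ ∇P(S^X), πᵢ = E_{Q*}[Xᵢ] for i ≥ 1 and π₀ = k₀,
the vector π lies in the core of the cost game c^X(S) = P(Σ_{i∈S} Xᵢ). -/
theorem stmt_14 {Ω : Type*} [MeasurableSpace Ω] (μ : Measure Ω) [IsProbabilityMeasure μ]
    (P : (Ω → ℝ) → ℝ) (S : Set (Measure Ω))
    (hSprob : ∀ Q ∈ S, IsProbabilityMeasure Q)
    (hSac : ∀ Q ∈ S, Q ≪ μ)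
    (hdom : ∀ ζ : Ω → ℝ, Measurable ζ → (∃ C : ℝ, ∀ ω, |ζ ω| ≤ C) →
      ∀ Q ∈ S, ∫ ω, ζ ω ∂Q ≤ P ζ)
    (htrans : ∀ (ξ : Ω → ℝ) (a : ℝ), P (fun ω => ξ ω + a) = P ξ + a)
    (N : ℕ) (X : Fin (N + 1) → Ω → ℝ)
    (hXpos : ∀ i ω, 0 ≤ X i ω) (hXm : ∀ i, Measurable (X i))
    (hXb : ∀ i, ∃ C : ℝ, ∀ ω, X i ω ≤ C)
    (k₀ : ℝ) (hk₀ : 0 ≤ k₀) (hX0 : ∀ ω, X 0 ω = k₀)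
    (SX : Ω → ℝ) (hSX : ∀ ω, SX ω = ∑ i ∈ Finset.univ.erase 0, X i ω)
    (Qstar : Measure Ω) (hQS : Qstar ∈ S) (hQSX : ∫ ω, SX ω ∂Qstar = P SX)
    (π : Fin (N + 1) → ℝ)
    (hπ0 : π 0 = k₀)
    (hπi : ∀ i : Fin (N + 1), i ≠ 0 → π i = ∫ ω, X i ω ∂Qstar) :
    (∀ T : Finset (Fin (N + 1)), ∑ i ∈ T, π i ≤ P (fun ω => ∑ i ∈ T, X i ω)) ∧
      ∑ i, π i = P (fun ω => ∑ i, X i ω) :=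
  stmt_14_general P S hSprob hdom htrans N X hXpos hXm hXb k₀ hX0 SX hSX Qstar hQS hQSX π hπ0 hπi
end
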